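/- Let Θ = {(x,y,z) ∈ ℝ³ : x + z ≤ 0} and C = {(x,y,z) ∈ ℝ³ : x + y + z ≤ 0, y ≥ 0}. Then the normal cone mapping 𝒩(p) = N(p, Θ) does NOT have the Aubin property with respect to C around ((0,0,0), (0,0,0)); i.e., for every κ ≥ 0 and every neighborhood U of 0 ∈ ℝ³ and V of 0 ∈ ℝ³ there exist p, q ∈ C ∩ U with N(p,Θ) ∩ V ⊄ N(q,Θ) + κ‖p − q‖ 𝔹. -/

import Mathlib

/-!
At `0` the normal cone of `Θ = {x + z ≤ 0}` contains the ray `ℝ₊ (1, 0, 1)`, so it meets every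
neighbourhood `V` of `0` in some `w ≠ 0`. The points `q = t (-1, 1, 0)`, `t > 0`, lie in `C` and in
the interior of `Θ`, where the normal cone is `{0}`; the Aubin inclusion at `(0, q)` would force
`‖w‖ ≤ κ ‖q‖`, which fails once `t` is small.
-/

open Set Filter Topology

noncomputable section

/-- The normal cone mapping of the half-space `Θ = {x + z ≤ 0}` (empty-valued outside `Θ`). -/
def NN12 (Θ : Set (EuclideanSpace ℝ (Fin 3))) (p : EuclideanSpace ℝ (Fin 3)) :
    Set (EuclideanSpace ℝ (Fin 3)) :=
  {v | p ∈ Θ ∧ ∀ y ∈ Θ, (inner ℝ v (y - p) : ℝ) ≤ 0}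

theorem tendsto_smul_nhdsGT_zero {E : Type*} [AddCommMonoid E] [TopologicalSpace E] [Module ℝ E]
    [ContinuousSMul ℝ E] (v : E) : Tendsto (fun s : ℝ => s • v) (𝓝[>] 0) (𝓝 0) :=
  ((show Continuous (fun s : ℝ => s • v) by fun_prop).tendsto' 0 0 (zero_smul ℝ v)).mono_left
    nhdsWithin_le_nhds

theorem eq_zero_of_forall_inner_sub_nonpos_of_mem_interior {E : Type*} [NormedAddCommGroup E]
    [InnerProductSpace ℝ E] {Θ : Set E} {p v : E} (hp : p ∈ interior Θ)
    (hv : ∀ y ∈ Θ, inner ℝ v (y - p) ≤ 0) : v = 0 := by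
  have hmove : Tendsto (fun ε : ℝ => p + ε • v) (𝓝[>] 0) (𝓝 p) := by
    simpa using tendsto_const_nhds.add (tendsto_smul_nhdsGT_zero v)
  obtain ⟨ε, hεΘ, hε⟩ :=
    ((hmove.eventually (mem_interior_iff_mem_nhds.1 hp)).and self_mem_nhdsWithin).exists
  have h := hv _ hεΘ
  rw [add_sub_cancel_left, real_inner_smul_right, real_inner_self_eq_norm_sq] at h
  simpa using nonpos_of_mul_nonpos_right h hε

theorem not_aubin_of_ray_of_frequently_subset_zero {E : Type*} [NormedAddCommGroup E]
    [NormedSpace ℝ E] (F : E → Set E) (C : Set E) {p a : E} (hp : p ∈ C) (ha : a ≠ 0)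
    (hray : ∀ s : ℝ, 0 < s → s • a ∈ F p) (hq : ∃ᶠ q in 𝓝 p, q ∈ C ∧ F q ⊆ {0}) (κ : ℝ) :
    ∀ U ∈ 𝓝 p, ∀ V ∈ 𝓝 (0 : E), ∃ p' ∈ C ∩ U, ∃ q ∈ C ∩ U,
      ¬ (F p' ∩ V ⊆ {w | ∃ v ∈ F q, ‖w - v‖ ≤ κ * ‖p' - q‖}) := by
  intro U hU V hV
  obtain ⟨s, hsV, hs⟩ :=
    (((tendsto_smul_nhdsGT_zero a).eventually hV).and self_mem_nhdsWithin).exists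
  have hw : 0 < ‖s • a‖ := norm_pos_iff.2 (smul_ne_zero (ne_of_gt hs) ha)
  have hdist : Tendsto (fun q => κ * ‖p - q‖) (𝓝 p) (𝓝 0) :=
    (show Continuous (fun q => κ * ‖p - q‖) by fun_prop).tendsto' p 0 (by simp)
  obtain ⟨q, ⟨hqC, hFq⟩, hqU, hqκ⟩ :=
    (hq.and_eventually ((show ∀ᶠ q in 𝓝 p, q ∈ U from hU).and
      (hdist.eventually (gt_mem_nhds hw)))).exists
  refine ⟨p, ⟨hp, mem_of_mem_nhds hU⟩, q, ⟨hqC, hqU⟩, fun hsub => ?_⟩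
  obtain ⟨v, hv, hle⟩ := hsub ⟨hray s hs, hsV⟩
  rw [hFq hv, sub_zero] at hle
  linarith

theorem NN12_subset_zero_of_mem_interior {Θ : Set (EuclideanSpace ℝ (Fin 3))}
    {q : EuclideanSpace ℝ (Fin 3)} (hq : q ∈ interior Θ) : NN12 Θ q ⊆ {0} :=
  fun _ hv => eq_zero_of_forall_inner_sub_nonpos_of_mem_interior hq hv.2

theorem smul_mem_NN12_zero {s : ℝ} (hs : 0 ≤ s) :
    s • !₂[1, 0, 1] ∈ NN12 {p | p 0 + p 2 ≤ 0} 0 := by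
  refine ⟨by simp, fun y hy => ?_⟩
  have : inner ℝ (s • !₂[(1 : ℝ), 0, 1]) (y - 0) = s * (y 0 + y 2) := by
    simp [PiLp.inner_apply, Fin.sum_univ_three, mul_add, mul_comm]
  rw [this]
  exact mul_nonpos_of_nonneg_of_nonpos hs hy

theorem smul_mem_interior_halfSpace {t : ℝ} (ht : 0 < t) :
    t • !₂[-1, 1, 0] ∈ interior {p : EuclideanSpace ℝ (Fin 3) | p 0 + p 2 ≤ 0} := by
  have hopen : IsOpen {p : EuclideanSpace ℝ (Fin 3) | p 0 + p 2 < 0} :=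
    isOpen_lt (by fun_prop) continuous_const
  refine hopen.subset_interior_iff.2 (ofPred_subset_ofPred.2 fun _ => le_of_lt) ?_
  simp [ht]

/-- With `Θ = {x + z ≤ 0}` and `C = {x + y + z ≤ 0, y ≥ 0}`, the normal cone mapping
`p ↦ N(p, Θ)` fails the Aubin property with respect to `C` around `(0, 0)`. -/
theorem stmt12 (Θ C : Set (EuclideanSpace ℝ (Fin 3)))
    (hΘ : Θ = {p | p 0 + p 2 ≤ 0})
    (hC : C = {p | p 0 + p 1 + p 2 ≤ 0 ∧ 0 ≤ p 1}) :
    ∀ κ : ℝ, 0 ≤ κ → ∀ U ∈ 𝓝 (0 : EuclideanSpace ℝ (Fin 3)),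
      ∀ V ∈ 𝓝 (0 : EuclideanSpace ℝ (Fin 3)),
      ∃ p ∈ C ∩ U, ∃ q ∈ C ∩ U,
        ¬ (NN12 Θ p ∩ V ⊆ {w | ∃ v ∈ NN12 Θ q, ‖w - v‖ ≤ κ * ‖p - q‖}) := by
  subst hΘ hC
  intro κ _
  refine not_aubin_of_ray_of_frequently_subset_zero _ _ (a := !₂[1, 0, 1]) (by simp) (by simp)
    (fun s hs => smul_mem_NN12_zero hs.le) ?_ κ
  refine (tendsto_smul_nhdsGT_zero !₂[-1, 1, 0]).frequently (Eventually.frequently ?_)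
  filter_upwards [self_mem_nhdsWithin] with t (ht : 0 < t)
  exact ⟨by simp [ht.le], NN12_subset_zero_of_mem_interior (smul_mem_interior_halfSpace ht)⟩
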